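/- Let f : ℝⁿ → ℝ be a polynomial of degree d ≥ 2 and let c ∈ ℝ. Suppose (x_k) is a sequence in ℝⁿ such that ‖x_k‖ → +∞, x_k/‖x_k‖ → u for some unit vector u ∈ S^{n-1}, f(x_k) → c, and ‖x_k‖·‖∇f(x_k)‖ → 0 (failure of the Malgrange condition at c along (x_k)). Then ∇f_d(u) = 0 and f_{d-1}(u) = 0. -/

import Mathlib

/-!
Write `x_k = t_k • v_k` with `t_k = ‖x_k‖ → ∞` and `v_k → u`. If `p = ∑_{j ≤ m} p_j` with `p_j`
homogeneous of degree `j`, then `p(x_k) = ∑ t_k^j p_j(v_k)`; when these values converge and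
`m ≥ 1`, dividing by `t_k^m` gives `p_m(u) = 0`. This applies to `∂_i f`, which has degree `≤ d - 1`
and top part `∂_i f_d` and tends to `0` along `x_k`, and, by Euler's identity, to
`d f - ⟨x, ∇f⟩ = ∑_j (d - j) f_j`, which has degree `≤ d - 1` and top part `f_{d-1}` and tends to
`d c`.
-/

open MvPolynomial Filter Topology

/-- Evaluation of a multivariate polynomial at a point of Euclidean space. -/
noncomputable def pevalE {n : ℕ} (f : MvPolynomial (Fin n) ℝ) (x : EuclideanSpace ℝ (Fin n)) : ℝ :=
  eval (EuclideanSpace.equiv (Fin n) ℝ x) f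

/-- The gradient vector (∂f/∂x_1, …, ∂f/∂x_n) of a polynomial, at a point of Euclidean space. -/
noncomputable def pgrad {n : ℕ} (f : MvPolynomial (Fin n) ℝ) (x : EuclideanSpace ℝ (Fin n)) :
    EuclideanSpace ℝ (Fin n) :=
  (EuclideanSpace.equiv (Fin n) ℝ).symm
    (fun i => eval (EuclideanSpace.equiv (Fin n) ℝ x) (pderiv i f))

open Finset

section LeadingCoefficient

variable {ι : Type*} {l : Filter ι} {t : ι → ℝ} {a : ℕ → ι → ℝ} {α : ℕ → ℝ} {m : ℕ}

theorem tendsto_inv_pow_mul_sum_pow_mul (ht : Tendsto t l atTop)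
    (ha : ∀ j ≤ m, Tendsto (a j) l (𝓝 (α j))) :
    Tendsto (fun k => (t k ^ m)⁻¹ * ∑ j ∈ range (m + 1), t k ^ j * a j k) l (𝓝 (α m)) := by
  have hlim : Tendsto (fun k => ∑ j ∈ range (m + 1), (t k)⁻¹ ^ (m - j) * a j k) l
      (𝓝 (∑ j ∈ range (m + 1), (0 : ℝ) ^ (m - j) * α j)) :=
    tendsto_finsetSum _ fun j hj =>
      (ht.inv_tendsto_atTop.pow _).mul (ha j (Nat.lt_succ_iff.mp (mem_range.mp hj)))
  have hα : ∑ j ∈ range (m + 1), (0 : ℝ) ^ (m - j) * α j = α m := by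
    rw [sum_range_succ, Nat.sub_self, pow_zero, one_mul, add_eq_right]
    exact sum_eq_zero fun j hj => by
      rw [zero_pow (by rw [mem_range] at hj; omega), zero_mul]
  rw [hα] at hlim
  refine hlim.congr' ?_
  filter_upwards [ht.eventually_gt_atTop 0] with k hk
  rw [mul_sum]
  refine sum_congr rfl fun j hj => ?_
  rw [← mul_assoc, inv_pow, pow_sub₀ _ hk.ne' (Nat.lt_succ_iff.mp (mem_range.mp hj)), mul_inv,
    inv_inv]

theorem eq_zero_of_tendsto_sum_pow_mul [l.NeBot] (hm : m ≠ 0) (ht : Tendsto t l atTop)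
    (ha : ∀ j ≤ m, Tendsto (a j) l (𝓝 (α j))) {L : ℝ}
    (hL : Tendsto (fun k => ∑ j ∈ range (m + 1), t k ^ j * a j k) l (𝓝 L)) :
    α m = 0 := by
  have hdecay : Tendsto (fun k => (t k ^ m)⁻¹ * ∑ j ∈ range (m + 1), t k ^ j * a j k) l (𝓝 0) := by
    simpa using ((tendsto_pow_atTop hm).comp ht).inv_tendsto_atTop.mul hL
  exact tendsto_nhds_unique (tendsto_inv_pow_mul_sum_pow_mul ht ha) hdecay

end LeadingCoefficient

namespace MvPolynomial

variable {σ R : Type*}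

theorem IsHomogeneous.eval_smul [CommSemiring R] {φ : MvPolynomial σ R} {m : ℕ}
    (hφ : φ.IsHomogeneous m) (c : R) (y : σ → R) :
    eval (c • y) φ = c ^ m * eval y φ := by
  rw [eval_eq, eval_eq, mul_sum]
  refine sum_congr rfl fun s hs => ?_
  rw [hφ.degree_eq_sum_deg_support hs]
  simp only [Pi.smul_apply, smul_eq_mul, mul_pow, prod_mul_distrib, prod_pow_eq_pow_sum]
  ring

theorem sum_homogeneousComponent_of_totalDegree_le [CommSemiring R] {φ : MvPolynomial σ R}
    {m : ℕ} (hφ : φ.totalDegree ≤ m) :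
    ∑ j ∈ range (m + 1), homogeneousComponent j φ = φ := by
  conv_rhs => rw [← sum_homogeneousComponent φ]
  refine (sum_subset (range_subset_range.mpr (by omega)) fun j _ hj => ?_).symm
  exact homogeneousComponent_eq_zero _ _ (by rw [mem_range] at hj; omega)

theorem pderiv_eq_sum_pderiv_homogeneousComponent [CommSemiring R] {φ : MvPolynomial σ R}
    {m : ℕ} (hφ : φ.totalDegree ≤ m + 1) (i : σ) :
    pderiv i φ = ∑ j ∈ range (m + 1), pderiv i (homogeneousComponent (j + 1) φ) := by
  conv_lhs => rw [← sum_homogeneousComponent_of_totalDegree_le hφ]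
  rw [map_sum, sum_range_succ', homogeneousComponent_zero, pderiv_C, add_zero]

theorem C_mul_sub_sum_X_mul_pderiv [CommRing R] [Fintype σ] {φ : MvPolynomial σ R} {m : ℕ}
    (hφ : φ.totalDegree ≤ m) :
    C (m : R) * φ - ∑ i, X i * pderiv i φ =
      ∑ j ∈ range (m + 1), C ((m : R) - j) * homogeneousComponent j φ := by
  conv_lhs => rw [← sum_homogeneousComponent_of_totalDegree_le hφ]
  simp only [map_sum, mul_sum]
  rw [sum_comm, ← sum_sub_distrib]
  refine sum_congr rfl fun j _ => ?_
  rw [(homogeneousComponent_isHomogeneous j φ).sum_X_mul_pderiv, map_sub, sub_mul, map_natCast,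
    map_natCast, nsmul_eq_mul]

end MvPolynomial

section AlongRays

variable {σ ι : Type*} {l : Filter ι} [l.NeBot] {t : ι → ℝ} {v : ι → σ → ℝ} {u : σ → ℝ} {L : ℝ}

theorem eval_eq_zero_of_tendsto_eval_smul_sum {m : ℕ} (hm : m ≠ 0)
    {P : ℕ → MvPolynomial σ ℝ} (hP : ∀ j, (P j).IsHomogeneous j) (ht : Tendsto t l atTop)
    (hv : Tendsto v l (𝓝 u))
    (hL : Tendsto (fun k => eval (t k • v k) (∑ j ∈ range (m + 1), P j)) l (𝓝 L)) :
    eval u (P m) = 0 :=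
  eq_zero_of_tendsto_sum_pow_mul hm ht (a := fun j k => eval (v k) (P j))
    (fun j _ => ((continuous_eval (P j)).tendsto u).comp hv)
    (by simpa only [map_sum, (hP _).eval_smul] using hL)

theorem eval_pderiv_homogeneousComponent_eq_zero_of_tendsto {φ : MvPolynomial σ ℝ} {d : ℕ}
    (hd : 2 ≤ d) (hφ : φ.totalDegree ≤ d) (i : σ) (ht : Tendsto t l atTop)
    (hv : Tendsto v l (𝓝 u)) (hL : Tendsto (fun k => eval (t k • v k) (pderiv i φ)) l (𝓝 L)) :
    eval u (pderiv i (homogeneousComponent d φ)) = 0 := by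
  obtain ⟨m, rfl⟩ : ∃ m, d = m + 1 := ⟨d - 1, by omega⟩
  refine eval_eq_zero_of_tendsto_eval_smul_sum (by omega)
    (P := fun j => pderiv i (homogeneousComponent (j + 1) φ))
    (fun j => by simpa using (homogeneousComponent_isHomogeneous (j + 1) φ).pderiv) ht hv
    (L := L) ?_
  rwa [← pderiv_eq_sum_pderiv_homogeneousComponent hφ]

theorem eval_homogeneousComponent_eq_zero_of_tendsto [Fintype σ] {φ : MvPolynomial σ ℝ} {d : ℕ}
    (hd : 2 ≤ d) (hφ : φ.totalDegree ≤ d) (ht : Tendsto t l atTop) (hv : Tendsto v l (𝓝 u))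
    (hL : Tendsto (fun k => eval (t k • v k) (C (d : ℝ) * φ - ∑ i, X i * pderiv i φ)) l (𝓝 L)) :
    eval u (homogeneousComponent (d - 1) φ) = 0 := by
  obtain ⟨m, rfl⟩ : ∃ m, d = m + 1 := ⟨d - 1, by omega⟩
  have hP := eval_eq_zero_of_tendsto_eval_smul_sum (by omega : m ≠ 0)
    (P := fun j => C (((m + 1 : ℕ) : ℝ) - j) * homogeneousComponent j φ)
    (fun j => (homogeneousComponent_isHomogeneous j φ).C_mul _) ht hv (L := L) (by
      rwa [C_mul_sub_sum_X_mul_pderiv hφ, sum_range_succ _ (m + 1), sub_self, C_0, zero_mul,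
        add_zero] at hL)
  simpa using hP

end AlongRays

theorem inner_pgrad {n : ℕ} (f : MvPolynomial (Fin n) ℝ) (x : EuclideanSpace ℝ (Fin n)) :
    inner ℝ x (pgrad f x) = eval (EuclideanSpace.equiv (Fin n) ℝ x) (∑ i, X i * pderiv i f) := by
  simp only [PiLp.inner_apply, RCLike.inner_apply, conj_trivial, map_sum, eval_mul, eval_X]
  exact sum_congr rfl fun i _ => mul_comm _ _

theorem statement1_general {n : ℕ} (f : MvPolynomial (Fin n) ℝ) (d : ℕ) (hd : 2 ≤ d)
    (hdeg : f.totalDegree = d) (c : ℝ)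
    (x : ℕ → EuclideanSpace ℝ (Fin n)) (u : EuclideanSpace ℝ (Fin n))
    (hnorm : Tendsto (fun k => ‖x k‖) atTop atTop)
    (hdir : Tendsto (fun k => (‖x k‖)⁻¹ • x k) atTop (𝓝 u))
    (hval : Tendsto (fun k => pevalE f (x k)) atTop (𝓝 c))
    (hmal : Tendsto (fun k => ‖x k‖ * ‖pgrad f (x k)‖) atTop (𝓝 0)) :
    pgrad (homogeneousComponent d f) u = 0 ∧
      pevalE (homogeneousComponent (d - 1) f) u = 0 := by
  set E := EuclideanSpace.equiv (Fin n) ℝ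
  have hray : ∀ᶠ k in atTop, E (x k) = ‖x k‖ • E ((‖x k‖)⁻¹ • x k) :=
    (hnorm.eventually_gt_atTop 0).mono fun k hk => by rw [← map_smul, smul_inv_smul₀ hk.ne']
  have hdirE : Tendsto (fun k => E ((‖x k‖)⁻¹ • x k)) atTop (𝓝 (E u)) :=
    (E.continuous.tendsto u).comp hdir
  have hgrad : Tendsto (fun k => ‖pgrad f (x k)‖) atTop (𝓝 0) := by
    refine (hmal.div_atTop hnorm).congr' ?_
    filter_upwards [hnorm.eventually_gt_atTop 0] with k hk
    exact mul_div_cancel_left₀ _ hk.ne'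
  constructor
  · ext i
    refine eval_pderiv_homogeneousComponent_eq_zero_of_tendsto hd hdeg.le i hnorm hdirE
      ((squeeze_zero_norm (fun k => PiLp.norm_apply_le (pgrad f (x k)) i) hgrad).congr' ?_)
    filter_upwards [hray] with k hk
    rw [← hk]
    rfl
  · have hinner : Tendsto (fun k => inner ℝ (x k) (pgrad f (x k))) atTop (𝓝 0) :=
      squeeze_zero_norm (fun k => norm_inner_le_norm _ _) hmal
    refine eval_homogeneousComponent_eq_zero_of_tendsto hd hdeg.le hnorm hdirE
      (((hval.const_mul (d : ℝ)).sub hinner).congr' ?_)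
    filter_upwards [hray] with k hk
    rw [← hk, eval_sub, eval_mul, eval_C, ← inner_pgrad]
    rfl

/-- If `f : ℝⁿ → ℝ` is a polynomial of degree `d ≥ 2`, `c ∈ ℝ`, and `(x_k)` is a sequence with
`‖x_k‖ → ∞`, `x_k/‖x_k‖ → u` (`u` a unit vector), `f(x_k) → c` and `‖x_k‖·‖∇f(x_k)‖ → 0`
(failure of the Malgrange condition at `c` along `(x_k)`), then `∇f_d(u) = 0` and
`f_{d-1}(u) = 0`. -/
theorem statement1 {n : ℕ} (f : MvPolynomial (Fin n) ℝ) (d : ℕ) (hd : 2 ≤ d)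
    (hdeg : f.totalDegree = d) (c : ℝ)
    (x : ℕ → EuclideanSpace ℝ (Fin n)) (u : EuclideanSpace ℝ (Fin n)) (hu : ‖u‖ = 1)
    (hnorm : Tendsto (fun k => ‖x k‖) atTop atTop)
    (hdir : Tendsto (fun k => (‖x k‖)⁻¹ • x k) atTop (𝓝 u))
    (hval : Tendsto (fun k => pevalE f (x k)) atTop (𝓝 c))
    (hmal : Tendsto (fun k => ‖x k‖ * ‖pgrad f (x k)‖) atTop (𝓝 0)) :
    pgrad (homogeneousComponent d f) u = 0 ∧
      pevalE (homogeneousComponent (d - 1) f) u = 0 :=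
  statement1_general f d hd hdeg c x u hnorm hdir hval hmal
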